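/- For every n ∈ ℕ, the derivative ε_n' of the residual ε_n(x) = erf(x) − f_n(x) vanishes to order 2n+2 at the origin: the j-th derivative of ε_n' at 0 equals 0 for every 0 ≤ j ≤ 2n+1, and its (2n+2)-th derivative at 0 equals (2n+2)! / (√π · 2^n · ∏_{i=0}^n (2i+1)). -/

import Mathlib

open Real intervalIntegral

/-- The error function. -/
noncomputable def erf (x : ℝ) : ℝ :=
  (2 / Real.sqrt π) * ∫ t in (0:ℝ)..x, Real.exp (-t ^ 2)

/-- The Hermite-type polynomials `p k x`. -/
noncomputable def p : ℕ → ℝ → ℝ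
  | 0 => fun _ => 1
  | (k + 1) => fun x => deriv (p k) x - 2 * x * p k x

/-- Spline coefficients `c_{n,k}`. -/
noncomputable def c (n k : ℕ) : ℝ :=
  ((Nat.factorial n : ℝ) / ((Nat.factorial (n - k) : ℝ) * (Nat.factorial (k + 1) : ℝ))) *
    ((Nat.factorial (2 * n + 1 - k) : ℝ) / (2 * (Nat.factorial (2 * n + 1) : ℝ)))

/-- The n-th order spline based approximation to the error function. -/
noncomputable def f (n : ℕ) (x : ℝ) : ℝ :=
  (2 / Real.sqrt π) * ∑ k ∈ Finset.range (n + 1),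
    c n k * x ^ (k + 1) * (p k 0 + (-1 : ℝ) ^ k * p k x * Real.exp (-x ^ 2))

/-!
With `φ x = exp (-x²)` and `D Q = Q' - 2XQ` one has `(Q φ)' = (D Q) φ`, so `p k = D^k 1` and
`ε_n' = A + B φ` for explicit polynomials `A`, `B`; the `j`-th derivative of `ε_n'` at `0` is
`A^(j)(0) + (D^j B)(0)`. Since `D (X Q) = Q + X D Q`, `(D^j (X^m Q))(0) = j^(m) (D^(j-m) Q)(0)`
with the falling factorial `j^(m)`, and everything becomes `(2/√π) p_j(0)` times a number. A
Chu–Vandermonde identity for falling factorials evaluates that number as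
`(n+1)!/(2n+2)! · (2n+1-j)^(n+1) - [j ≤ n] (j+1)! c_{n,j}`: it vanishes for `j ≤ 2n+1`, and at
`j = 2n+2` it is `(-1)^(n+1) (n+1)!² / (2n+2)!`, while `p_{2i}(0) = (-2)^i (2i-1)!!`.
-/

open Polynomial Finset
open scoped Nat

theorem cast_factorial_two_mul {R : Type*} [CommSemiring R] (n : ℕ) :
    ((2 * n)! : R) = 2 ^ n * n ! * ∏ i ∈ range n, (2 * (i : R) + 1) := by
  induction n with
  | zero => simp
  | succ n ih =>
    rw [mul_add_one, Nat.factorial_succ, Nat.factorial_succ, Nat.cast_mul, Nat.cast_mul, ih,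
      prod_range_succ, Nat.factorial_succ]
    push_cast
    ring

theorem sum_neg_one_pow_choose_mul_descPochhammer {R : Type*} [CommRing R] (m : ℕ) (a x : R) :
    ∑ i ∈ range (m + 1), (m.choose i : R) *
        ((-1) ^ i * (descPochhammer R (m - i)).eval (a - i) * (descPochhammer R i).eval x) =
      (descPochhammer R m).eval (a - x) := by
  induction m generalizing a with
  | zero => simp
  | succ m ih =>
    rw [sum_choose_succ_mul
      (fun i l => (-1) ^ i * (descPochhammer R l).eval (a - i) * (descPochhammer R i).eval x) m,
      ← sum_add_distrib, descPochhammer_succ_left, eval_mul, eval_X, eval_comp,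
      eval_sub, eval_X, eval_one, sub_right_comm, ← ih (a - 1), mul_sum]
    refine sum_congr rfl fun i hi => ?_
    have hi : i ≤ m := Nat.lt_succ_iff.mp (mem_range.mp hi)
    rw [show m + 1 - i = (m - i) + 1 by omega, descPochhammer_succ_left, eval_mul, eval_X,
      eval_comp, eval_sub, eval_X, eval_one, descPochhammer_succ_eval, Nat.cast_succ, ← sub_sub,
      sub_right_comm a]
    ring

theorem c_eq_choose_mul_descFactorial {n k : ℕ} (hk : k ≤ n) :
    c n k = (n + 1)! / (2 * n + 2)! * (n + 1).choose (k + 1) *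
      (2 * n + 1 - k).descFactorial (n - k) := by
  have hfac : (2 * n + 1 - k)! = (n + 1)! * (2 * n + 1 - k).descFactorial (n - k) := by
    rw [← Nat.factorial_mul_descFactorial (show n - k ≤ 2 * n + 1 - k by omega),
      show 2 * n + 1 - k - (n - k) = n + 1 by omega]
  rw [c, hfac, Nat.cast_choose ℝ (show k + 1 ≤ n + 1 by omega), Nat.add_sub_add_right,
    show 2 * n + 2 = (2 * n + 1) + 1 by ring, Nat.factorial_succ (2 * n + 1), Nat.factorial_succ n]
  push_cast
  field_simp
  ring

theorem sum_neg_one_pow_mul_c_mul_descPochhammer (n : ℕ) (x : ℝ) :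
    ∑ k ∈ range (n + 1), (-1) ^ k * c n k * (descPochhammer ℝ (k + 1)).eval x =
      1 - (n + 1)! / (2 * n + 2)! * (descPochhammer ℝ (n + 1)).eval (2 * n + 2 - x) := by
  have key := sum_neg_one_pow_choose_mul_descPochhammer (n + 1) (2 * n + 2 : ℝ) x
  rw [sum_range_succ'] at key
  have hfirst :
      (n + 1)! / (2 * n + 2)! * (descPochhammer ℝ (n + 1)).eval (2 * n + 2 : ℝ) = 1 := by
    have h := Nat.factorial_mul_descFactorial (show n + 1 ≤ 2 * n + 2 by omega)
    rw [show 2 * n + 2 - (n + 1) = n + 1 by omega] at h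
    rw [show (2 * n + 2 : ℝ) = (2 * n + 2 : ℕ) by push_cast; rfl,
      descPochhammer_eval_eq_descFactorial, div_mul_eq_mul_div, ← Nat.cast_mul, h,
      div_self (by positivity)]
  have hrest : ∑ k ∈ range (n + 1), (-1) ^ k * c n k * (descPochhammer ℝ (k + 1)).eval x =
      -((n + 1)! / (2 * n + 2)! * ∑ k ∈ range (n + 1), ((n + 1).choose (k + 1) : ℝ) *
        ((-1) ^ (k + 1) *
          (descPochhammer ℝ (n + 1 - (k + 1))).eval (2 * n + 2 - ((k + 1 : ℕ) : ℝ)) *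
          (descPochhammer ℝ (k + 1)).eval x)) := by
    rw [mul_sum, ← sum_neg_distrib]
    refine sum_congr rfl fun k hk => ?_
    have hk : k ≤ n := Nat.lt_succ_iff.mp (mem_range.mp hk)
    rw [c_eq_choose_mul_descFactorial hk, show n + 1 - (k + 1) = n - k by omega,
      show (2 * n + 2 - (k + 1 : ℕ) : ℝ) = (2 * n + 1 - k : ℕ) by
        rw [Nat.cast_sub (by omega)]; push_cast; ring,
      descPochhammer_eval_eq_descFactorial]
    ring
  rw [hrest, ← key]
  simp only [Nat.choose_zero_right, Nat.cast_one, pow_zero, one_mul, CharP.cast_eq_zero, sub_zero,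
    Nat.sub_zero, descPochhammer_zero, eval_one, mul_one]
  linear_combination hfirst

noncomputable def gaussDeriv : Module.End ℝ ℝ[X] :=
  derivative - LinearMap.mulLeft ℝ (2 * X)

theorem gaussDeriv_apply (Q : ℝ[X]) : gaussDeriv Q = derivative Q - 2 * X * Q := rfl

theorem gaussDeriv_X_mul (Q : ℝ[X]) : gaussDeriv (X * Q) = Q + X * gaussDeriv Q := by
  rw [gaussDeriv_apply, gaussDeriv_apply, derivative_mul, derivative_X, one_mul]
  ring

theorem gaussDeriv_pow_succ_apply (j : ℕ) (Q : ℝ[X]) :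
    (gaussDeriv ^ (j + 1)) Q = (gaussDeriv ^ j) (gaussDeriv Q) := by
  rw [pow_succ, Module.End.mul_apply]

theorem eval_zero_gaussDeriv_pow_X_mul (i : ℕ) (Q : ℝ[X]) :
    ((gaussDeriv ^ i) (X * Q)).eval 0 = i * ((gaussDeriv ^ (i - 1)) Q).eval 0 := by
  induction i generalizing Q with
  | zero => simp
  | succ i ih =>
    rw [gaussDeriv_pow_succ_apply, gaussDeriv_X_mul, map_add, eval_add, ih]
    rcases i with _ | i
    · simp
    · rw [Nat.add_sub_cancel, Nat.add_sub_cancel, ← gaussDeriv_pow_succ_apply]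
      push_cast
      ring

theorem eval_zero_gaussDeriv_pow_X_pow_mul (j m : ℕ) (Q : ℝ[X]) :
    ((gaussDeriv ^ j) (X ^ m * Q)).eval 0 =
      j.descFactorial m * ((gaussDeriv ^ (j - m)) Q).eval 0 := by
  induction m generalizing Q with
  | zero => simp
  | succ m ih =>
    rw [pow_succ, mul_assoc, ih, eval_zero_gaussDeriv_pow_X_mul, Nat.descFactorial_succ,
      Nat.sub_sub]
    push_cast
    ring

theorem eval_zero_gaussDeriv_pow_add_two (k : ℕ) :
    ((gaussDeriv ^ (k + 2)) 1).eval 0 = -2 * (k + 1) * ((gaussDeriv ^ k) 1).eval 0 := by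
  have h : gaussDeriv 1 = (-2 : ℝ) • (X * 1) := by
    rw [gaussDeriv_apply, derivative_one, ← C_mul', C_neg]
    simp only [map_ofNat]
    ring
  rw [gaussDeriv_pow_succ_apply, h, map_smul, eval_smul, eval_zero_gaussDeriv_pow_X_mul,
    Nat.add_sub_cancel, smul_eq_mul]
  push_cast
  ring

theorem eval_zero_gaussDeriv_pow_two_mul (i : ℕ) :
    ((gaussDeriv ^ (2 * i)) 1).eval 0 = (-2) ^ i * ∏ l ∈ range i, (2 * (l : ℝ) + 1) := by
  induction i with
  | zero => simp
  | succ i ih =>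
    rw [mul_add_one, eval_zero_gaussDeriv_pow_add_two, ih, prod_range_succ]
    push_cast
    ring

theorem p_eq_eval_gaussDeriv_pow (k : ℕ) : p k = fun x => ((gaussDeriv ^ k) 1).eval x := by
  induction k with
  | zero => funext x; simp [p]
  | succ k ih =>
    funext x
    simp only [p, ih, Polynomial.deriv, pow_succ', Module.End.mul_apply, gaussDeriv_apply,
      eval_sub, eval_mul, eval_ofNat, eval_X]

noncomputable def polyGauss (A B : ℝ[X]) (x : ℝ) : ℝ := A.eval x + B.eval x * exp (-x ^ 2)

theorem hasDerivAt_polyGauss (A B : ℝ[X]) (x : ℝ) :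
    HasDerivAt (polyGauss A B) (polyGauss (derivative A) (gaussDeriv B) x) x := by
  have hexp : HasDerivAt (fun x => exp (-x ^ 2)) (exp (-x ^ 2) * -(2 * x)) x := by
    simpa using ((hasDerivAt_pow 2 x).neg).exp
  refine ((A.hasDerivAt x).fun_add ((B.hasDerivAt x).fun_mul hexp)).congr_deriv ?_
  simp only [polyGauss, gaussDeriv_apply, eval_sub, eval_mul, eval_ofNat, eval_X]
  ring

theorem iteratedDeriv_polyGauss (j : ℕ) (A B : ℝ[X]) :
    iteratedDeriv j (polyGauss A B) = polyGauss (derivative^[j] A) ((gaussDeriv ^ j) B) := by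
  induction j generalizing A B with
  | zero => simp
  | succ j ih =>
    rw [iteratedDeriv_succ', funext fun x => (hasDerivAt_polyGauss A B x).deriv, ih,
      Function.iterate_succ_apply, gaussDeriv_pow_succ_apply]

theorem hasDerivAt_erf (x : ℝ) : HasDerivAt erf (2 / √π * exp (-x ^ 2)) x :=
  ((by fun_prop : Continuous fun t : ℝ => exp (-t ^ 2)).integral_hasStrictDerivAt 0 x)
    |>.hasDerivAt.const_mul _

noncomputable def fPolyPart (n : ℕ) : ℝ[X] :=
  ∑ k ∈ range (n + 1), C (2 / √π * c n k * ((gaussDeriv ^ k) 1).eval 0) * X ^ (k + 1)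

noncomputable def fGaussPart (n : ℕ) : ℝ[X] :=
  ∑ k ∈ range (n + 1), (2 / √π * c n k * (-1) ^ k) • (X ^ (k + 1) * (gaussDeriv ^ k) 1)

theorem f_eq_polyGauss (n : ℕ) : f n = polyGauss (fPolyPart n) (fGaussPart n) := by
  funext x
  simp only [f, polyGauss, fPolyPart, fGaussPart, p_eq_eval_gaussDeriv_pow, eval_finsetSum,
    eval_smul, eval_mul, eval_C, eval_pow, eval_X, smul_eq_mul, mul_sum, sum_mul,
    ← sum_add_distrib]
  exact sum_congr rfl fun k _ => by ring

theorem deriv_residual (n : ℕ) :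
    deriv (fun x => erf x - f n x) =
      polyGauss (-derivative (fPolyPart n)) (C (2 / √π) - gaussDeriv (fGaussPart n)) := by
  funext x
  rw [f_eq_polyGauss]
  refine ((hasDerivAt_erf x).sub (hasDerivAt_polyGauss _ _ x)).deriv.trans ?_
  simp only [polyGauss, eval_neg, eval_sub, eval_C]
  ring

theorem eval_zero_iterate_derivative_fPolyPart (n j : ℕ) :
    (derivative^[j + 1] (fPolyPart n)).eval 0 =
      if j ≤ n then 2 / √π * c n j * ((gaussDeriv ^ j) 1).eval 0 * (j + 1)! else 0 := by
  rw [← coeff_zero_eq_eval_zero, coeff_iterate_derivative, zero_add, Nat.descFactorial_self,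
    fPolyPart, finsetSum_coeff]
  simp only [coeff_C_mul_X_pow, add_left_inj, sum_ite_eq, mem_range, Nat.lt_succ_iff]
  split_ifs <;> simp [nsmul_eq_mul, mul_comm]

theorem eval_zero_gaussDeriv_pow_fGaussPart (n j : ℕ) :
    ((gaussDeriv ^ (j + 1)) (fGaussPart n)).eval 0 = 2 / √π * ((gaussDeriv ^ j) 1).eval 0 *
      ∑ k ∈ range (n + 1), (-1) ^ k * c n k *
        (descPochhammer ℝ (k + 1)).eval (j + 1 : ℝ) := by
  rw [fGaussPart, map_sum, eval_finsetSum, mul_sum]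
  refine sum_congr rfl fun k _ => ?_
  rw [map_smul, eval_smul, eval_zero_gaussDeriv_pow_X_pow_mul, smul_eq_mul,
    show (j + 1 : ℝ) = (j + 1 : ℕ) by push_cast; rfl, descPochhammer_eval_eq_descFactorial]
  rcases le_or_gt k j with hkj | hjk
  · rw [Nat.add_sub_add_right, ← Module.End.mul_apply, ← pow_add, Nat.sub_add_cancel hkj]
    ring
  · rw [Nat.descFactorial_of_lt (by omega)]
    simp

noncomputable def residualFactor (n j : ℕ) : ℝ :=
  (n + 1)! / (2 * n + 2)! * (descPochhammer ℝ (n + 1)).eval (2 * n + 1 - j : ℝ) -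
    if j ≤ n then c n j * (j + 1)! else 0

theorem iteratedDeriv_deriv_residual_zero (n j : ℕ) :
    iteratedDeriv j (deriv (fun x => erf x - f n x)) 0 =
      2 / √π * ((gaussDeriv ^ j) 1).eval 0 * residualFactor n j := by
  rw [deriv_residual, iteratedDeriv_polyGauss, polyGauss, map_sub, ← gaussDeriv_pow_succ_apply,
    iterate_derivative_neg, ← Function.iterate_succ_apply, ← mul_one (C _), C_mul', map_smul,
    eval_neg, eval_sub, eval_smul, eval_zero_iterate_derivative_fPolyPart,
    eval_zero_gaussDeriv_pow_fGaussPart, sum_neg_one_pow_mul_c_mul_descPochhammer, residualFactor,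
    show (2 * n + 2 - (j + 1) : ℝ) = 2 * n + 1 - j by ring, show exp (-0 ^ 2 : ℝ) = 1 by simp,
    smul_eq_mul, mul_one]
  split_ifs <;> ring

theorem residualFactor_eq_zero {n j : ℕ} (hj : j ≤ 2 * n + 1) : residualFactor n j = 0 := by
  rw [residualFactor, sub_eq_zero, show (2 * n + 1 - j : ℝ) = (2 * n + 1 - j : ℕ) by
      rw [Nat.cast_sub hj]; push_cast; ring, descPochhammer_eval_eq_descFactorial]
  split_ifs with hjn
  · have h := Nat.factorial_mul_descFactorial (show n + 1 ≤ 2 * n + 1 - j by omega)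
    rw [show 2 * n + 1 - j - (n + 1) = n - j by omega] at h
    rw [c, ← h, show 2 * n + 2 = (2 * n + 1) + 1 by ring, Nat.factorial_succ (2 * n + 1),
      Nat.factorial_succ n, Nat.factorial_succ j]
    push_cast
    field_simp
    ring
  · rw [Nat.descFactorial_of_lt (by omega), Nat.cast_zero, mul_zero]

theorem residualFactor_two_mul_add_two (n : ℕ) :
    residualFactor n (2 * n + 2) = (-1) ^ (n + 1) * (n + 1)! ^ 2 / (2 * n + 2)! := by
  have hprod : ∏ i ∈ range (n + 1), ((2 * n + 1 : ℝ) - (2 * n + 2 : ℕ) - i) =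
      (-1) ^ (n + 1) * (n + 1)! := by
    rw [prod_congr rfl fun i _ =>
        show (2 * n + 1 : ℝ) - (2 * n + 2 : ℕ) - i = -1 * (i + 1 : ℕ) by push_cast; ring,
      prod_mul_distrib, prod_const, card_range, ← Nat.cast_prod,
      prod_range_add_one_eq_factorial]
  rw [residualFactor, if_neg (by omega), sub_zero, descPochhammer_eval_eq_prod_range, hprod]
  ring

/-- The derivative of the residual `ε_n = erf - f_n` vanishes to order `2n+2` at the
origin, with leading coefficient `(2n+2)!/(√π · 2^n · ∏_{i=0}^n (2i+1))`. -/
theorem residual_deriv_vanishing_order (n : ℕ) :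
    (∀ j ≤ 2 * n + 1,
      iteratedDeriv j (deriv (fun x => erf x - f n x)) 0 = 0) ∧
    iteratedDeriv (2 * n + 2) (deriv (fun x => erf x - f n x)) 0 =
      (Nat.factorial (2 * n + 2) : ℝ) /
        (Real.sqrt π * 2 ^ n * ∏ i ∈ Finset.range (n + 1), (2 * (i : ℝ) + 1)) := by
  refine ⟨fun j hj => ?_, ?_⟩
  · rw [iteratedDeriv_deriv_residual_zero, residualFactor_eq_zero hj, mul_zero]
  rw [iteratedDeriv_deriv_residual_zero, residualFactor_two_mul_add_two, ← mul_add_one,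
    eval_zero_gaussDeriv_pow_two_mul, cast_factorial_two_mul]
  have hsq : ((-1 : ℝ) ^ (n + 1)) ^ 2 = 1 := by
    rw [← pow_mul, mul_comm, pow_mul, neg_one_sq, one_pow]
  rw [neg_pow]
  field_simp
  rw [hsq]
  ring
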